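/- Let f be the triangle wave and for t ∈ ℝ set x = (t − f(t))/√2 and x_q = (t + f(t))/√2 (the image of the point (t, f(t)) under counterclockwise rotation by 45 degrees). Then for every t ∈ ℝ such that x is not a half-integer (i.e., x − ⌊x⌋ ≠ 1/2), x_q equals round(x), the nearest integer to x. -/

import Mathlib

/-!
Write `t = √2 (s + 1/4)` and `u = fract s`. Then `f(t) = √2 (1/4 - |u - 1/2|)`, so the rotated point
is `x = s + |u - 1/2|`, `x_q = s + 1/2 - |u - 1/2|`. On the rising half `u ≤ 1/2` of the wave, `x` is
the half-integer `⌊s⌋ + 1/2`; on the falling half `u > 1/2`, `x_q = ⌊s⌋ + 1` while `x = ⌊s⌋ + 2u - 1/2`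
lies within `1/2` of it.
-/

open Real

/-- The triangle wave obtained by rotating the rounding function by 45°:
`f(t) = (1/(2√2))·(1 − 4·|frac((t − √2/4)/√2) − 1/2|)`, periodic with period `√2`. -/
noncomputable def triangleWave (t : ℝ) : ℝ :=
  (1 / (2 * Real.sqrt 2)) *
    (1 - 4 * |Int.fract ((t - Real.sqrt 2 / 4) / Real.sqrt 2) - 1 / 2|)

theorem fract_add_abs_fract_sub_half_of_le {s : ℝ} (hs : Int.fract s ≤ 1 / 2) :
    Int.fract (s + |Int.fract s - 1 / 2|) = 1 / 2 := by
  have hx : s + |Int.fract s - 1 / 2| = ⌊s⌋ + 1 / 2 := by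
    rw [abs_of_nonpos (by linarith)]
    linarith [Int.floor_add_fract s]
  rw [hx, Int.fract_intCast_add, Int.fract_eq_self]
  norm_num

theorem round_add_abs_fract_sub_half_of_lt {s : ℝ} (hs : 1 / 2 < Int.fract s) :
    round (s + |Int.fract s - 1 / 2|) = ⌊s⌋ + 1 := by
  have hx : s + |Int.fract s - 1 / 2| + 1 / 2 = ⌊s⌋ + 2 * Int.fract s := by
    rw [abs_of_pos (by linarith)]
    linarith [Int.floor_add_fract s]
  have h2u : ⌊2 * Int.fract s⌋ = 1 :=
    Int.floor_eq_iff.mpr ⟨by push_cast; linarith, by push_cast; linarith [Int.fract_lt_one s]⟩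
  rw [round_eq, hx, Int.floor_intCast_add, h2u]

theorem add_half_sub_abs_fract_sub_half_eq_round {s : ℝ}
    (h : Int.fract (s + |Int.fract s - 1 / 2|) ≠ 1 / 2) :
    s + 1 / 2 - |Int.fract s - 1 / 2| = round (s + |Int.fract s - 1 / 2|) := by
  rcases le_or_gt (Int.fract s) (1 / 2) with hs | hs
  · exact absurd (fract_add_abs_fract_sub_half_of_le hs) h
  · rw [round_add_abs_fract_sub_half_of_lt hs, abs_of_pos (by linarith)]
    push_cast
    linarith [Int.floor_add_fract s]

theorem triangleWave_eq (t : ℝ) :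
    triangleWave t = √2 * (1 / 4 - |Int.fract (t / √2 - 1 / 4) - 1 / 2|) := by
  have hsq : √2 * √2 = 2 := Real.mul_self_sqrt zero_le_two
  have hs : (t - √2 / 4) / √2 = t / √2 - 1 / 4 := by field_simp
  have hc : (1 : ℝ) / (2 * √2) = √2 / 4 := by
    rw [div_eq_div_iff (by positivity) four_ne_zero]
    linarith
  rw [triangleWave, hs, hc]
  ring

theorem sub_triangleWave_div_sqrt_two (t : ℝ) :
    (t - triangleWave t) / √2 = t / √2 - 1 / 4 + |Int.fract (t / √2 - 1 / 4) - 1 / 2| := by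
  rw [triangleWave_eq]
  field_simp
  ring

theorem add_triangleWave_div_sqrt_two (t : ℝ) :
    (t + triangleWave t) / √2 = t / √2 - 1 / 4 + 1 / 2 - |Int.fract (t / √2 - 1 / 4) - 1 / 2| := by
  rw [triangleWave_eq]
  field_simp
  ring

/-- Rotating the graph of the triangle wave by 45° counterclockwise yields the rounding
function: with `x = (t − f(t))/√2` and `x_q = (t + f(t))/√2`, whenever `x` is not a
half-integer, `x_q` equals the integer nearest to `x`. -/
theorem triangleWave_rotation_is_round (t x xq : ℝ)
    (hx : x = (t - triangleWave t) / Real.sqrt 2)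
    (hxq : xq = (t + triangleWave t) / Real.sqrt 2)
    (h : Int.fract x ≠ 1 / 2) :
    xq = (round x : ℤ) := by
  rw [sub_triangleWave_div_sqrt_two] at hx
  rw [add_triangleWave_div_sqrt_two] at hxq
  subst hx hxq
  exact add_half_sub_abs_fract_sub_half_eq_round h
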